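/- arXiv:1106.0470 — 5 statements merged into one kernel-verified Lean document; each statement's English description precedes it below -/
import Mathlib

section
/- Let X and Y be independent standard Gaussian random variables and let a, b be real numbers. Set W = X(aX + bY). Then for every positive integer p, E[|W - E[W]|^p] < (10 Var[W])^{p/2} * p!. -/
/-!
Under the joint law `γ ⊗ γ` of `(X, Y)`, `W` has mean `a` and variance `2a² + b²`, and
`W - a = a (X² - 1) + b X Y`. The Gaussian moments `E X^{2k} = (2k - 1)‼ ≤ 2^k k!` give
`E |X² - 1|^p ≤ 3^p p!` and `E (|X| |Y|)^p = (E |X|^p)² ≤ 2^p p!`, so Minkowski's inequality yields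
`E |W - a|^p ≤ (3|a| + 2|b|)^p p!`. Finally `(3|a| + 2|b|)² ≤ 17/2 (2a² + b²) < 10 Var[W]`.
-/

open MeasureTheory ProbabilityTheory Real
open scoped Nat

section Moments

variable {Ω : Type*} [MeasurableSpace Ω] {μ : Measure Ω}

lemma sq_integral_le_integral_sq [IsProbabilityMeasure μ] {f : Ω → ℝ} (hf : MemLp f 2 μ) :
    (∫ ω, f ω ∂μ) ^ 2 ≤ ∫ ω, f ω ^ 2 ∂μ := by
  have h := variance_nonneg f μ
  rw [variance_eq_sub hf] at h
  simpa [sub_nonneg] using h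

lemma integral_abs_pow_le_of_abs_le_add {f U V : Ω → ℝ} {p : ℕ} {α β A B c : ℝ}
    (hU : 0 ≤ U) (hV : 0 ≤ V)
    (hUi : Integrable (fun ω => U ω ^ p) μ) (hVi : Integrable (fun ω => V ω ^ p) μ)
    (hUp : ∫ ω, U ω ^ p ∂μ ≤ A ^ p * c) (hVp : ∫ ω, V ω ^ p ∂μ ≤ B ^ p * c)
    (hA : 0 < A) (hB : 0 < B) (hα : 0 ≤ α) (hβ : 0 ≤ β) (hs : 0 < α * A + β * B)
    (hf : ∀ ω, |f ω| ≤ α * U ω + β * V ω) :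
    ∫ ω, |f ω| ^ p ∂μ ≤ (α * A + β * B) ^ p * c := by
  set s := α * A + β * B
  -- `α U + β V` is the convex combination of `s U / A` and `s V / B` with weights `α A / s`,
  -- `β B / s`, so convexity of `x ↦ x ^ p` splits `(α U + β V) ^ p`.
  have hconvex : ∀ ω, |f ω| ^ p ≤
      α * A / s * (s / A) ^ p * U ω ^ p + β * B / s * (s / B) ^ p * V ω ^ p := fun ω => by
    have hjensen := (convexOn_pow p).2
      (Set.mem_Ici.2 (mul_nonneg (div_nonneg hs.le hA.le) (hU ω)))
      (Set.mem_Ici.2 (mul_nonneg (div_nonneg hs.le hB.le) (hV ω)))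
      (by positivity : 0 ≤ α * A / s) (by positivity : 0 ≤ β * B / s) (by field_simp; rfl)
    have hcomb : α * A / s * (s / A * U ω) + β * B / s * (s / B * V ω) = α * U ω + β * V ω := by
      field_simp
    simp only [smul_eq_mul, hcomb, mul_pow] at hjensen
    calc |f ω| ^ p ≤ (α * U ω + β * V ω) ^ p := pow_le_pow_left₀ (abs_nonneg _) (hf ω) p
      _ ≤ _ := hjensen.trans_eq (by ring)
  have hUi' := hUi.const_mul (α * A / s * (s / A) ^ p)
  have hVi' := hVi.const_mul (β * B / s * (s / B) ^ p)
  calc ∫ ω, |f ω| ^ p ∂μ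
      ≤ ∫ ω, (α * A / s * (s / A) ^ p * U ω ^ p + β * B / s * (s / B) ^ p * V ω ^ p) ∂μ :=
        integral_mono_of_nonneg (ae_of_all _ fun ω => by positivity) (hUi'.add hVi')
          (ae_of_all _ hconvex)
    _ = α * A / s * (s / A) ^ p * ∫ ω, U ω ^ p ∂μ
          + β * B / s * (s / B) ^ p * ∫ ω, V ω ^ p ∂μ := by
        rw [integral_add hUi' hVi', integral_const_mul, integral_const_mul]
    _ ≤ α * A / s * (s / A) ^ p * (A ^ p * c) + β * B / s * (s / B) ^ p * (B ^ p * c) := by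
        gcongr
    _ = s ^ p * c := by
        rw [div_pow, div_pow]
        field_simp
        ring

end Moments

lemma Nat.doubleFactorial_two_mul_sub_one_le (k : ℕ) : (2 * k - 1)‼ ≤ 2 ^ k * k ! := by
  induction k with
  | zero => rfl
  | succ k ih =>
    rw [show 2 * (k + 1) - 1 = 2 * k + 1 by omega, Nat.doubleFactorial_add_one,
      Nat.factorial_succ, pow_succ]
    calc (2 * k + 1) * (2 * k - 1)‼ ≤ (2 * (k + 1)) * (2 ^ k * k !) :=
          Nat.mul_le_mul (by omega) ih
      _ = 2 ^ k * 2 * ((k + 1) * k !) := by ring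

local notation "γ" => gaussianReal 0 1

lemma integral_abs_rpow_gaussianReal {s : ℝ} (hs : -1 < s) :
    ∫ x, |x| ^ s ∂γ = 2 ^ (s / 2) * Gamma ((s + 1) / 2) / √π := by
  have hpdf : ∀ x : ℝ, gaussianPDFReal 0 1 x • |x| ^ s
      = (√(2 * π))⁻¹ * (|x| ^ s * exp (-(1 / 2) * |x| ^ (2 : ℝ))) := fun x => by
    simp only [gaussianPDFReal, smul_eq_mul, rpow_two, sq_abs]
    push_cast
    ring_nf
  simp_rw [integral_gaussianReal_eq_integral_smul one_ne_zero, hpdf, integral_const_mul]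
  rw [integral_comp_abs (f := fun x => x ^ s * exp (-(1 / 2) * x ^ (2 : ℝ))),
    integral_rpow_mul_exp_neg_mul_rpow two_pos hs one_half_pos]
  have h2 : ((1 : ℝ) / 2) ^ (-(s + 1) / 2) = 2 ^ (s / 2) * √2 := by
    rw [one_div, inv_rpow zero_le_two, ← rpow_neg zero_le_two, sqrt_eq_rpow, ← rpow_add two_pos]
    ring_nf
  rw [h2, sqrt_mul zero_le_two]
  field_simp

lemma integral_pow_two_mul_gaussianReal (k : ℕ) : ∫ x, x ^ (2 * k) ∂γ = (2 * k - 1 : ℕ)‼ := by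
  have h := integral_abs_rpow_gaussianReal (s := (2 * k : ℕ))
    (by linarith [(2 * k).cast_nonneg (α := ℝ)])
  simp only [rpow_natCast, (even_two_mul k).pow_abs] at h
  rw [h, show ((2 * k : ℕ) + 1 : ℝ) / 2 = k + 1 / 2 by push_cast; ring, Gamma_nat_add_half,
    show ((2 * k : ℕ) : ℝ) / 2 = k by push_cast; ring, rpow_natCast]
  field_simp

lemma integrable_pow_gaussianReal (n : ℕ) : Integrable (fun x => x ^ n) γ := by
  refine (integrable_norm_iff (by fun_prop)).1 ?_
  simpa [norm_pow] using (memLp_id_gaussianReal (μ := 0) (v := 1) n).integrable_norm_pow'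

lemma integral_sq_gaussianReal : ∫ x, x ^ 2 ∂γ = 1 := by
  simpa using integral_pow_two_mul_gaussianReal 1

lemma integral_pow_four_gaussianReal : ∫ x, x ^ 4 ∂γ = 3 := by
  simpa using integral_pow_two_mul_gaussianReal 2

lemma integral_abs_pow_gaussianReal_sq_le (p : ℕ) : (∫ x, |x| ^ p ∂γ) ^ 2 ≤ 2 ^ p * p ! := by
  have hsq : ∀ x : ℝ, (|x| ^ p) ^ 2 = x ^ (2 * p) := fun x => by
    rw [← pow_mul, mul_comm, (even_two_mul p).pow_abs]
  have hmem : MemLp (fun x : ℝ => |x| ^ p) 2 γ :=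
    (memLp_two_iff_integrable_sq (by fun_prop)).2
      (by simpa only [hsq] using integrable_pow_gaussianReal (2 * p))
  calc (∫ x, |x| ^ p ∂γ) ^ 2 ≤ ∫ x, x ^ (2 * p) ∂γ := by
        simpa only [hsq] using sq_integral_le_integral_sq hmem
    _ ≤ 2 ^ p * p ! := by
        rw [integral_pow_two_mul_gaussianReal]
        exact_mod_cast Nat.doubleFactorial_two_mul_sub_one_le p

lemma abs_sq_sub_one_pow_le (x : ℝ) (p : ℕ) : |x ^ 2 - 1| ^ p ≤ x ^ (2 * p) + 1 := by
  rcases le_total (x ^ 2) 1 with h | h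
  · have : |x ^ 2 - 1| ^ p ≤ 1 :=
      pow_le_one₀ (abs_nonneg _) (abs_le.2 ⟨by nlinarith [sq_nonneg x], by linarith⟩)
    linarith [(even_two_mul p).pow_nonneg x]
  · have : |x ^ 2 - 1| ^ p ≤ x ^ (2 * p) := by
      rw [pow_mul]
      exact pow_le_pow_left₀ (abs_nonneg _) (abs_le.2 ⟨by linarith, by linarith⟩) p
    linarith

lemma integrable_abs_sq_sub_one_pow_gaussianReal (p : ℕ) :
    Integrable (fun x => |x ^ 2 - 1| ^ p) γ :=
  ((integrable_pow_gaussianReal (2 * p)).add (integrable_const 1)).mono' (by fun_prop)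
    (ae_of_all _ fun x => by
      rw [Real.norm_of_nonneg (by positivity)]
      exact abs_sq_sub_one_pow_le x p)

lemma integral_abs_sq_sub_one_pow_gaussianReal_le {p : ℕ} (hp : p ≠ 0) :
    ∫ x, |x ^ 2 - 1| ^ p ∂γ ≤ (3 : ℝ) ^ p * p ! := by
  have hfac : (2 * p - 1)‼ + 1 ≤ 3 ^ p * p ! := calc
    (2 * p - 1)‼ + 1 ≤ 2 ^ p * p ! + p ! := by
      gcongr
      · exact Nat.doubleFactorial_two_mul_sub_one_le p
      · exact p.factorial_pos
    _ = (2 ^ p + 1) * p ! := by ring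
    _ ≤ 3 ^ p * p ! := by
      gcongr
      exact Nat.pow_lt_pow_left (by norm_num) hp
  calc ∫ x, |x ^ 2 - 1| ^ p ∂γ ≤ ∫ x, (x ^ (2 * p) + 1) ∂γ :=
        integral_mono (integrable_abs_sq_sub_one_pow_gaussianReal p)
          ((integrable_pow_gaussianReal (2 * p)).add (integrable_const 1))
          (fun x => abs_sq_sub_one_pow_le x p)
    _ = (2 * p - 1)‼ + 1 := by
        rw [integral_add (integrable_pow_gaussianReal _) (integrable_const 1),
          integral_pow_two_mul_gaussianReal]
        simp
    _ ≤ 3 ^ p * p ! := by exact_mod_cast hfac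

section Product

variable (a b : ℝ)

lemma integral_quadratic_gaussianReal_prod :
    ∫ z, z.1 * (a * z.1 + b * z.2) ∂(Measure.prod γ γ) = a := by
  have hsq : Integrable (fun z : ℝ × ℝ => z.1 ^ 2) (Measure.prod γ γ) :=
    (integrable_pow_gaussianReal 2).comp_fst γ
  have hmix : Integrable (fun z : ℝ × ℝ => z.1 * z.2) (Measure.prod γ γ) := by
    simpa using (integrable_pow_gaussianReal 1).mul_prod (integrable_pow_gaussianReal 1)
  calc ∫ z, z.1 * (a * z.1 + b * z.2) ∂(Measure.prod γ γ)
      = ∫ z, (a * z.1 ^ 2 + b * (z.1 * z.2)) ∂(Measure.prod γ γ) := by congr 1; ext z; ring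
    _ = a * ∫ z, z.1 ^ 2 ∂(Measure.prod γ γ) + b * ∫ z, z.1 * z.2 ∂(Measure.prod γ γ) := by
        rw [integral_add (hsq.const_mul a) (hmix.const_mul b), integral_const_mul,
          integral_const_mul]
    _ = a := by
        rw [integral_fun_fst (fun x => x ^ 2), integral_prod_mul (fun x => x) (fun y => y)]
        simp [integral_sq_gaussianReal, integral_id_gaussianReal]

lemma variance_quadratic_gaussianReal_prod :
    Var[fun z => z.1 * (a * z.1 + b * z.2); Measure.prod γ γ] = 2 * a ^ 2 + b ^ 2 := by
  have h4 : Integrable (fun z : ℝ × ℝ => a ^ 2 * z.1 ^ 4) (Measure.prod γ γ) :=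
    ((integrable_pow_gaussianReal 4).comp_fst γ).const_mul _
  have h31 : Integrable (fun z : ℝ × ℝ => 2 * a * b * (z.1 ^ 3 * z.2)) (Measure.prod γ γ) := by
    simpa using ((integrable_pow_gaussianReal 3).mul_prod
      (integrable_pow_gaussianReal 1)).const_mul (2 * a * b)
  have h22 : Integrable (fun z : ℝ × ℝ => b ^ 2 * (z.1 ^ 2 * z.2 ^ 2)) (Measure.prod γ γ) :=
    ((integrable_pow_gaussianReal 2).mul_prod (integrable_pow_gaussianReal 2)).const_mul _
  have h431 : Integrable (fun z : ℝ × ℝ => a ^ 2 * z.1 ^ 4 + 2 * a * b * (z.1 ^ 3 * z.2))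
      (Measure.prod γ γ) := h4.add h31
  have hsq : ∀ z : ℝ × ℝ, (z.1 * (a * z.1 + b * z.2)) ^ 2
      = a ^ 2 * z.1 ^ 4 + 2 * a * b * (z.1 ^ 3 * z.2) + b ^ 2 * (z.1 ^ 2 * z.2 ^ 2) :=
    fun z => by ring
  have hmem : MemLp (fun z : ℝ × ℝ => z.1 * (a * z.1 + b * z.2)) 2 (Measure.prod γ γ) :=
    (memLp_two_iff_integrable_sq (by fun_prop)).2 (by simp only [hsq]; exact h431.add h22)
  rw [variance_eq_sub hmem, integral_quadratic_gaussianReal_prod]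
  simp only [Pi.pow_apply, hsq]
  rw [integral_add h431 h22, integral_add h4 h31, integral_const_mul, integral_const_mul,
    integral_const_mul, integral_fun_fst (fun x => x ^ 4),
    integral_prod_mul (fun x => x ^ 3) (fun y => y),
    integral_prod_mul (fun x => x ^ 2) (fun y => y ^ 2)]
  simp [integral_pow_four_gaussianReal, integral_sq_gaussianReal, integral_id_gaussianReal]
  ring

lemma integral_abs_quadratic_sub_pow_gaussianReal_prod_le {p : ℕ} (hp : p ≠ 0)
    (hab : 0 < |a| * 3 + |b| * 2) :
    ∫ z, |z.1 * (a * z.1 + b * z.2) - a| ^ p ∂(Measure.prod γ γ)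
      ≤ (|a| * 3 + |b| * 2) ^ p * p ! := by
  have hprod : ∀ z : ℝ × ℝ, (|z.1| * |z.2|) ^ p = |z.1| ^ p * |z.2| ^ p :=
    fun z => mul_pow _ _ _
  have habs : Integrable (fun x : ℝ => |x| ^ p) γ := by
    simpa using (integrable_pow_gaussianReal p).norm
  refine integral_abs_pow_le_of_abs_le_add (U := fun z => |z.1 ^ 2 - 1|)
    (V := fun z => |z.1| * |z.2|) (fun z => abs_nonneg _) (fun z => by positivity)
    ((integrable_abs_sq_sub_one_pow_gaussianReal p).comp_fst γ)
    (by simpa only [hprod] using habs.mul_prod habs) ?_ ?_ three_pos two_pos (abs_nonneg a)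
    (abs_nonneg b) hab fun z => ?_
  · rw [integral_fun_fst (fun x => |x ^ 2 - 1| ^ p)]
    simpa using integral_abs_sq_sub_one_pow_gaussianReal_le hp
  · simp only [hprod]
    rw [integral_prod_mul (fun x => |x| ^ p) (fun y => |y| ^ p), ← sq]
    exact integral_abs_pow_gaussianReal_sq_le p
  · calc |z.1 * (a * z.1 + b * z.2) - a| = |a * (z.1 ^ 2 - 1) + b * (z.1 * z.2)| := by ring_nf
      _ ≤ |a * (z.1 ^ 2 - 1)| + |b * (z.1 * z.2)| := abs_add_le _ _
      _ = |a| * |z.1 ^ 2 - 1| + |b| * (|z.1| * |z.2|) := by rw [abs_mul, abs_mul, abs_mul]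

end Product

/-- For `W = X (a X + b Y)` with `X, Y` independent standard Gaussians, the centered
absolute moments satisfy `E[|W - E[W]|^p] < (10 Var[W])^(p/2) * p!` for all positive
integers `p` (assuming `Var[W] > 0`). -/
theorem moment_bound_quadratic_gaussian
    {Ω : Type*} [MeasurableSpace Ω] (P : Measure Ω) [IsProbabilityMeasure P]
    (X Y : Ω → ℝ) (hX : Measurable X) (hY : Measurable Y)
    (hXY : IndepFun X Y P)
    (hXlaw : Measure.map X P = gaussianReal 0 1)
    (hYlaw : Measure.map Y P = gaussianReal 0 1)
    (a b : ℝ) (W : Ω → ℝ) (hW : W = fun ω => X ω * (a * X ω + b * Y ω))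
    (hvar : 0 < variance W P) :
    ∀ p : ℕ, 0 < p →
      ∫ ω, |W ω - P[W]| ^ p ∂P
        < (10 * variance W P) ^ ((p : ℝ) / 2) * (Nat.factorial p) := by
  intro p hp
  have hlaw : MeasurePreserving (fun ω => (X ω, Y ω)) P (Measure.prod γ γ) :=
    ⟨hX.prodMk hY, by rw [hXY.map_prod_eq_prod_map_map hX.aemeasurable hY.aemeasurable, hXlaw,
      hYlaw]⟩
  have htransfer : ∀ g : ℝ × ℝ → ℝ, Continuous g →
      ∫ ω, g (X ω, Y ω) ∂P = ∫ z, g z ∂(Measure.prod γ γ) := fun g hg => by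
    rw [← hlaw.map_eq, integral_map hlaw.measurable.aemeasurable hg.aestronglyMeasurable]
  have hmean : P[W] = a := by
    rw [hW]
    exact (htransfer (fun z => z.1 * (a * z.1 + b * z.2)) (by fun_prop)).trans
      (integral_quadratic_gaussianReal_prod a b)
  have hvarW : variance W P = 2 * a ^ 2 + b ^ 2 := by
    rw [hW]
    exact (hlaw.variance_fun_comp (f := fun z => z.1 * (a * z.1 + b * z.2))
      (by fun_prop)).trans (variance_quadratic_gaussianReal_prod a b)
  set s := |a| * 3 + |b| * 2
  have hs2 : s ^ 2 < 10 * variance W P := by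
    nlinarith [sq_nonneg (4 * |a| - 3 * |b|), sq_abs a, sq_abs b]
  have hs : 0 < s := by
    nlinarith [abs_nonneg a, abs_nonneg b, sq_abs a, sq_abs b]
  calc ∫ ω, |W ω - P[W]| ^ p ∂P
      = ∫ z, |z.1 * (a * z.1 + b * z.2) - a| ^ p ∂(Measure.prod γ γ) := by
        rw [hmean, hW]
        exact htransfer (fun z => |z.1 * (a * z.1 + b * z.2) - a| ^ p) (by fun_prop)
    _ ≤ s ^ p * p ! := integral_abs_quadratic_sub_pow_gaussianReal_prod_le a b hp.ne' hs
    _ = (s ^ 2) ^ ((p : ℝ) / 2) * p ! := by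
        rw [← rpow_natCast_mul hs.le, Nat.cast_ofNat, mul_div_cancel₀ _ two_ne_zero,
          rpow_natCast]
    _ < (10 * variance W P) ^ ((p : ℝ) / 2) * p ! := by gcongr
end

section
/- As alpha tends to infinity, sqrt(alpha) * (1/pi) int_0^1 e^{-alpha w} / sqrt(w(1-w)) dw converges to (1/pi) * integral_0^infty e^{-s} s^{-1/2} ds = 1/sqrt(pi). -/
open MeasureTheory Real Filter Topology

/-- The substituted integrand `s ↦ e^{-s} (s(1-s/α))^{-1/2}`. -/
noncomputable def gg (α s : ℝ) : ℝ := Real.exp (-s) * (s * (1 - s / α)) ^ (-(1 : ℝ) / 2)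

lemma gg_meas (α : ℝ) : Measurable (gg α) := by
  unfold gg
  fun_prop

lemma subst_eq {α : ℝ} (hα : 0 < α) :
    (∫ s in Set.Ioo (0 : ℝ) α, gg α s)
      = Real.sqrt α * ∫ w in Set.Ioo (0 : ℝ) 1,
          Real.exp (-α * w) * (w * (1 - w)) ^ (-(1 : ℝ) / 2) := by
  have hsne : Real.sqrt α ≠ 0 := (Real.sqrt_ne_zero'.2 hα)
  have key : ∀ s ∈ Set.uIcc (0 : ℝ) α,
      gg α s = (Real.sqrt α)⁻¹ *
        (Real.exp (-α * (s / α)) * ((s / α) * (1 - s / α)) ^ (-(1 : ℝ) / 2)) := by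
    intro s hs
    rw [Set.uIcc_of_le hα.le] at hs
    have h1 : -α * (s / α) = -s := by field_simp
    have h2 : s / α * (1 - s / α) = s * (1 - s / α) / α := by ring
    have h3 : (0 : ℝ) ≤ s * (1 - s / α) := by
      have hs1 : 0 ≤ s := hs.1
      have hs2 : s / α ≤ 1 := (div_le_one hα).2 hs.2
      have : 0 ≤ 1 - s / α := by linarith
      positivity
    rw [h1, h2, Real.div_rpow h3 hα.le, div_eq_mul_inv, ← Real.rpow_neg hα.le,
      show -(-(1 : ℝ) / 2) = 1 / 2 by norm_num, ← Real.sqrt_eq_rpow]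
    unfold gg
    field_simp
  have l1 : (∫ s in Set.Ioo (0 : ℝ) α, gg α s) = ∫ s in (0 : ℝ)..α, gg α s := by
    rw [intervalIntegral.integral_of_le hα.le, integral_Ioc_eq_integral_Ioo]
  have l2 : (∫ w in Set.Ioo (0 : ℝ) 1, Real.exp (-α * w) * (w * (1 - w)) ^ (-(1 : ℝ) / 2))
      = ∫ w in (0 : ℝ)..1, Real.exp (-α * w) * (w * (1 - w)) ^ (-(1 : ℝ) / 2) := by
    rw [intervalIntegral.integral_of_le zero_le_one, integral_Ioc_eq_integral_Ioo]
  rw [l1, l2, intervalIntegral.integral_congr key, intervalIntegral.integral_const_mul,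
    intervalIntegral.integral_comp_div
      (f := fun w => Real.exp (-α * w) * (w * (1 - w)) ^ (-(1 : ℝ) / 2)) hα.ne',
    zero_div, div_self hα.ne', smul_eq_mul, ← mul_assoc]
  congr 1
  rw [inv_mul_eq_div, Real.div_sqrt]


lemma half_rpow : ((1 : ℝ) / 2) ^ (-(1 : ℝ) / 2) = Real.sqrt 2 := by
  rw [show ((1 : ℝ) / 2) = 2⁻¹ by norm_num, show (-(1 : ℝ) / 2) = -(1 / 2) by norm_num,
    Real.rpow_neg (by norm_num), ← Real.sqrt_eq_rpow, Real.sqrt_inv, inv_inv]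

lemma gg_le_bound {α s : ℝ} (hα : 0 < α) (hs : 0 < s) (hs2 : s ≤ α / 2) :
    ‖gg α s‖ ≤ Real.sqrt 2 * (Real.exp (-s) * s ^ (-(1 : ℝ) / 2)) := by
  have hdiv : s / α ≤ 1 / 2 := by
    rw [div_le_div_iff₀ hα (by norm_num)]; linarith
  have hhalf : (1 : ℝ) / 2 ≤ 1 - s / α := by linarith
  have hpos : (0 : ℝ) ≤ 1 - s / α := by linarith
  unfold gg
  rw [Real.norm_eq_abs, abs_of_nonneg (by positivity),
    Real.mul_rpow hs.le hpos]
  have key : (1 - s / α) ^ (-(1 : ℝ) / 2) ≤ Real.sqrt 2 := by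
    calc (1 - s / α) ^ (-(1 : ℝ) / 2) ≤ ((1 : ℝ) / 2) ^ (-(1 : ℝ) / 2) :=
          Real.rpow_le_rpow_of_nonpos (by norm_num) hhalf (by norm_num)
      _ = Real.sqrt 2 := half_rpow
  calc Real.exp (-s) * (s ^ (-(1 : ℝ) / 2) * (1 - s / α) ^ (-(1 : ℝ) / 2))
      ≤ Real.exp (-s) * (s ^ (-(1 : ℝ) / 2) * Real.sqrt 2) := by
        apply mul_le_mul_of_nonneg_left _ (Real.exp_nonneg _)
        exact mul_le_mul_of_nonneg_left key (Real.rpow_nonneg hs.le _)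
    _ = Real.sqrt 2 * (Real.exp (-s) * s ^ (-(1 : ℝ) / 2)) := by ring

lemma bound_integrable :
    IntegrableOn (fun s => Real.sqrt 2 * (Real.exp (-s) * s ^ (-(1 : ℝ) / 2)))
      (Set.Ioi (0 : ℝ)) := by
  have h := Real.GammaIntegral_convergent (by norm_num : (0 : ℝ) < 1 / 2)
  have h' : ((1 : ℝ) / 2 - 1) = -(1 : ℝ) / 2 := by norm_num
  rw [h'] at h
  exact h.const_mul _

lemma main_tendsto :
    Tendsto (fun α : ℝ => ∫ s in Set.Ioc (0 : ℝ) (α / 2), gg α s) atTop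
      (𝓝 (Real.sqrt π)) := by
  have hGamma : (∫ s in Set.Ioi (0 : ℝ), Real.exp (-s) * s ^ (-(1 : ℝ) / 2))
      = Real.sqrt π := by
    rw [show (-(1 : ℝ) / 2) = 1 / 2 - 1 by norm_num, ← Real.Gamma_eq_integral one_half_pos,
      Real.Gamma_one_half_eq]
  have hrepr : ∀ α : ℝ, (∫ s in Set.Ioc (0 : ℝ) (α / 2), gg α s)
      = ∫ s in Set.Ioi (0 : ℝ), (Set.Ioc (0 : ℝ) (α / 2)).indicator (gg α) s := by
    intro α
    rw [setIntegral_indicator measurableSet_Ioc,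
      Set.inter_eq_right.mpr Set.Ioc_subset_Ioi_self]
  rw [← hGamma]
  simp only [hrepr]
  apply tendsto_integral_filter_of_dominated_convergence
    (bound := fun s => Real.sqrt 2 * (Real.exp (-s) * s ^ (-(1 : ℝ) / 2)))
  · filter_upwards with α
    exact ((gg_meas α).indicator measurableSet_Ioc).aestronglyMeasurable
  · filter_upwards [eventually_gt_atTop (0 : ℝ)] with α hα
    filter_upwards [ae_restrict_mem measurableSet_Ioi] with s hs
    by_cases hmem : s ∈ Set.Ioc (0 : ℝ) (α / 2)
    · rw [Set.indicator_of_mem hmem]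
      exact gg_le_bound hα hmem.1 hmem.2
    · rw [Set.indicator_of_notMem hmem, norm_zero]
      have hs0 : (0 : ℝ) < s := hs
      positivity
  · exact bound_integrable
  · filter_upwards [ae_restrict_mem measurableSet_Ioi] with s hs
    have hs0 : (0 : ℝ) < s := hs
    have hev : (fun α : ℝ => (Set.Ioc (0 : ℝ) (α / 2)).indicator (gg α) s)
        =ᶠ[atTop] fun α => gg α s := by
      filter_upwards [eventually_ge_atTop (2 * s)] with α hα
      exact Set.indicator_of_mem (Set.mem_Ioc.mpr ⟨hs0, by linarith⟩) _
    rw [tendsto_congr' hev]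
    have h1 : Tendsto (fun α : ℝ => s * (1 - s / α)) atTop (𝓝 s) := by
      have hd : Tendsto (fun α : ℝ => s / α) atTop (𝓝 0) :=
        tendsto_const_nhds.div_atTop tendsto_id
      have h1a : Tendsto (fun α : ℝ => (1 : ℝ) - s / α) atTop (𝓝 (1 - 0)) :=
        (tendsto_const_nhds (x := (1 : ℝ))).sub hd
      have h1b : Tendsto (fun α : ℝ => s * (1 - s / α)) atTop (𝓝 (s * (1 - 0))) :=
        tendsto_const_nhds.mul h1a
      simpa using h1b
    have h2 : Tendsto (fun α : ℝ => (s * (1 - s / α)) ^ (-(1 : ℝ) / 2)) atTop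
        (𝓝 (s ^ (-(1 : ℝ) / 2))) :=
      ((Real.continuousAt_rpow_const s _ (Or.inl hs0.ne')).tendsto).comp h1
    exact tendsto_const_nhds.mul h2

-- tail interval integrability of (1 - s/α)^{-1/2} on α/2..α
lemma tail_q_intble {α : ℝ} (hα : 0 < α) :
    IntegrableOn (fun s : ℝ => (1 - s / α) ^ (-(1 : ℝ) / 2)) (Set.Ioo (α / 2) α) := by
  have i1 : IntervalIntegrable (fun x : ℝ => x ^ (-(1 : ℝ) / 2)) volume 0 (1 / 2) :=
    intervalIntegral.intervalIntegrable_rpow' (by norm_num)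
  have i2 := i1.comp_sub_left 1
  have i3 := i2.comp_mul_left (c := α⁻¹)
  have hαne : α ≠ 0 := hα.ne'
  have e1 : ((1 : ℝ) - 0) / α⁻¹ = α := by field_simp; norm_num
  have e2 : ((1 : ℝ) - 1 / 2) / α⁻¹ = α / 2 := by field_simp; ring
  rw [e1, e2] at i3
  have i4 : IntervalIntegrable (fun s : ℝ => (1 - s / α) ^ (-(1 : ℝ) / 2)) volume (α / 2) α := by
    simpa [div_eq_inv_mul] using i3.symm
  exact (intervalIntegrable_iff_integrableOn_Ioo_of_le (by linarith)).1 i4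

lemma gg_le_tail_bound {α s : ℝ} (hα : 0 < α) (hs1 : α / 2 ≤ s) (hs2 : s < α) :
    ‖gg α s‖ ≤ (Real.exp (-(α / 2)) * (α / 2) ^ (-(1 : ℝ) / 2)) * (1 - s / α) ^ (-(1 : ℝ) / 2) := by
  have hs0 : (0 : ℝ) < s := lt_of_lt_of_le (by linarith) hs1
  have hlt1 : s / α < 1 := (div_lt_one hα).2 hs2
  have hpos : (0 : ℝ) ≤ 1 - s / α := by linarith
  unfold gg
  rw [Real.norm_eq_abs, abs_of_nonneg (by positivity), Real.mul_rpow hs0.le hpos]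
  have e1 : Real.exp (-s) ≤ Real.exp (-(α / 2)) := Real.exp_le_exp.2 (by linarith)
  have e2 : s ^ (-(1 : ℝ) / 2) ≤ (α / 2) ^ (-(1 : ℝ) / 2) :=
    Real.rpow_le_rpow_of_nonpos (by positivity) hs1 (by norm_num)
  have h3 : (0 : ℝ) ≤ (1 - s / α) ^ (-(1 : ℝ) / 2) := Real.rpow_nonneg hpos _
  calc Real.exp (-s) * (s ^ (-(1 : ℝ) / 2) * (1 - s / α) ^ (-(1 : ℝ) / 2))
      ≤ Real.exp (-(α / 2)) * ((α / 2) ^ (-(1 : ℝ) / 2) * (1 - s / α) ^ (-(1 : ℝ) / 2)) := by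
        apply mul_le_mul e1 _ (by positivity) (Real.exp_nonneg _)
        exact mul_le_mul_of_nonneg_right e2 h3
    _ = (Real.exp (-(α / 2)) * (α / 2) ^ (-(1 : ℝ) / 2)) * (1 - s / α) ^ (-(1 : ℝ) / 2) := by ring

lemma gg_meas' (α : ℝ) : Measurable (gg α) := by unfold gg; fun_prop

lemma tail_integrableOn {α : ℝ} (hα : 0 < α) : IntegrableOn (gg α) (Set.Ioo (α / 2) α) := by
  apply Integrable.mono' (((tail_q_intble hα).const_mul
      (Real.exp (-(α / 2)) * (α / 2) ^ (-(1 : ℝ) / 2))))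
    ((gg_meas' α).aestronglyMeasurable)
  filter_upwards [ae_restrict_mem measurableSet_Ioo] with s hs
  exact gg_le_tail_bound hα hs.1.le hs.2

lemma tail_J {α : ℝ} (hα : 0 < α) :
    (∫ s in Set.Ioo (α / 2) α, (1 - s / α) ^ (-(1 : ℝ) / 2)) = α * Real.sqrt 2 := by
  have h1 : (∫ s in Set.Ioo (α / 2) α, (1 - s / α) ^ (-(1 : ℝ) / 2))
      = ∫ s in (α / 2)..α, (1 - s / α) ^ (-(1 : ℝ) / 2) := by
    rw [intervalIntegral.integral_of_le (by linarith), integral_Ioc_eq_integral_Ioo]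
  rw [h1, intervalIntegral.integral_comp_div (f := fun x => (1 - x) ^ (-(1 : ℝ) / 2)) hα.ne',
    intervalIntegral.integral_comp_sub_left (fun u => u ^ (-(1 : ℝ) / 2)) 1,
    div_self hα.ne', show α / 2 / α = 1 / 2 by field_simp,
    show (1:ℝ)-1 = 0 by norm_num, show (1:ℝ)-1/2 = 1/2 by norm_num, smul_eq_mul]
  congr 1
  rw [integral_rpow (Or.inl (by norm_num : (-1:ℝ) < -(1:ℝ)/2))]
  have h0 : (0:ℝ) ^ (-(1:ℝ)/2 + 1) = 0 := Real.zero_rpow (by norm_num)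
  have h12 : ((1:ℝ)/2) ^ (-(1:ℝ)/2 + 1) = (Real.sqrt 2)⁻¹ := by
    rw [show (-(1:ℝ)/2 + 1) = 1/2 by norm_num, ← Real.sqrt_eq_rpow,
      show ((1:ℝ)/2) = 2⁻¹ by norm_num, Real.sqrt_inv]
  rw [h0, h12]
  have h2 : Real.sqrt 2 * Real.sqrt 2 = 2 := Real.mul_self_sqrt (by norm_num)
  have h2ne : Real.sqrt 2 ≠ 0 := by positivity
  field_simp
  linarith [h2]

lemma tail_tendsto :
    Tendsto (fun α : ℝ => ∫ s in Set.Ioo (α / 2) α, gg α s) atTop (𝓝 0) := by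
  have hbd : ∀ᶠ α : ℝ in atTop, ‖∫ s in Set.Ioo (α / 2) α, gg α s‖
      ≤ 2 * Real.sqrt α * Real.exp (-(α / 2)) := by
    filter_upwards [eventually_gt_atTop (0 : ℝ)] with α hα
    have hb : ‖∫ s in Set.Ioo (α / 2) α, gg α s‖
        ≤ ∫ s in Set.Ioo (α / 2) α,
            (Real.exp (-(α / 2)) * (α / 2) ^ (-(1 : ℝ) / 2)) * (1 - s / α) ^ (-(1 : ℝ) / 2) := by
      apply norm_integral_le_of_norm_le
        ((tail_q_intble hα).const_mul (Real.exp (-(α / 2)) * (α / 2) ^ (-(1 : ℝ) / 2)))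
      filter_upwards [ae_restrict_mem measurableSet_Ioo] with s hs
      exact gg_le_tail_bound hα hs.1.le hs.2
    have hval : (∫ s in Set.Ioo (α / 2) α,
        (Real.exp (-(α / 2)) * (α / 2) ^ (-(1 : ℝ) / 2)) * (1 - s / α) ^ (-(1 : ℝ) / 2))
        = (Real.exp (-(α / 2)) * (α / 2) ^ (-(1 : ℝ) / 2)) * (α * Real.sqrt 2) := by
      rw [integral_const_mul, tail_J hα]
    rw [hval] at hb
    refine hb.trans (le_of_eq ?_)
    have hC2 : (α / 2) ^ (-(1 : ℝ) / 2) = Real.sqrt 2 / Real.sqrt α := by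
      rw [show (-(1 : ℝ) / 2) = -(1 / 2) by norm_num, Real.rpow_neg (by positivity),
        ← Real.sqrt_eq_rpow, Real.sqrt_div hα.le, inv_div]
    rw [hC2]
    have hsq : Real.sqrt α * Real.sqrt α = α := Real.mul_self_sqrt hα.le
    have h2sq : Real.sqrt 2 * Real.sqrt 2 = 2 := Real.mul_self_sqrt (by norm_num)
    have hαne : Real.sqrt α ≠ 0 := by positivity
    field_simp
    ring_nf
    rw [Real.sq_sqrt hα.le, Real.sq_sqrt (by norm_num : (0:ℝ) ≤ 2)]
  have h0 : Tendsto (fun α : ℝ => 2 * Real.sqrt α * Real.exp (-(α / 2))) atTop (𝓝 0) := by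
    have base := tendsto_rpow_mul_exp_neg_mul_atTop_nhds_zero (1 / 2) (1 / 2) (by norm_num)
    have base2 := base.const_mul (2 : ℝ)
    rw [mul_zero] at base2
    apply base2.congr'
    filter_upwards [eventually_ge_atTop (0 : ℝ)] with α hα
    rw [Real.sqrt_eq_rpow]
    ring_nf
  exact squeeze_zero_norm' hbd h0


lemma main_integrableOn {α : ℝ} (hα : 0 < α) : IntegrableOn (gg α) (Set.Ioc 0 (α / 2)) := by
  apply Integrable.mono' (bound_integrable.mono_set Set.Ioc_subset_Ioi_self)
    ((gg_meas α).aestronglyMeasurable)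
  filter_upwards [ae_restrict_mem measurableSet_Ioc] with s hs
  exact gg_le_bound hα hs.1 hs.2

lemma whole_tendsto :
    Tendsto (fun α : ℝ => ∫ s in Set.Ioo (0 : ℝ) α, gg α s) atTop (𝓝 (Real.sqrt π)) := by
  have hsplit : (fun α : ℝ => (∫ s in Set.Ioc (0 : ℝ) (α / 2), gg α s)
        + ∫ s in Set.Ioo (α / 2) α, gg α s)
      =ᶠ[atTop] fun α : ℝ => ∫ s in Set.Ioo (0 : ℝ) α, gg α s := by
    filter_upwards [eventually_gt_atTop (0 : ℝ)] with α hα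
    rw [← Set.Ioc_union_Ioo_eq_Ioo (by positivity : (0:ℝ) ≤ α / 2) (by linarith : α / 2 < α),
      setIntegral_union ?_ measurableSet_Ioo (main_integrableOn hα) (tail_integrableOn hα)]
    exact Set.disjoint_left.mpr fun x hx hx' => absurd hx.2 (not_le.mpr hx'.1)
  have h := main_tendsto.add tail_tendsto
  rw [add_zero] at h
  exact h.congr' hsplit

/-- Asymptotic evaluation:
`lim_{α → ∞} √α * (1/π) * ∫₀¹ e^{-αw} (w(1-w))^{-1/2} dw = 1/√π`. -/
theorem arcsine_laplace_asymptotics :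
    Tendsto
      (fun α : ℝ =>
        Real.sqrt α * ((1 / π) *
          ∫ w in Set.Ioo (0 : ℝ) 1, Real.exp (-α * w) * (w * (1 - w)) ^ (-(1 : ℝ) / 2)))
      atTop (nhds (1 / Real.sqrt π)) := by
  have h2 := whole_tendsto.const_mul (1 / π)
  have hval : 1 / π * Real.sqrt π = 1 / Real.sqrt π := by
    rw [one_div_mul_eq_div, div_eq_div_iff Real.pi_pos.ne' (Real.sqrt_pos.2 Real.pi_pos).ne',
      Real.mul_self_sqrt Real.pi_pos.le, one_mul]
  rw [hval] at h2
  apply h2.congr'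
  filter_upwards [eventually_gt_atTop (0 : ℝ)] with α hα
  rw [subst_eq hα]
  ring
end

section
/- Let N be a Poisson random variable with parameter alpha > 0. Then there is a constant K such that |E[1/N ; N >= 1] - 1/alpha| <= K * alpha^{-3/2} for all alpha >= 1. -/
set_option maxHeartbeats 1000000

open MeasureTheory Real

lemma ratio_ineq (C m a : ℝ) (hC : 0 ≤ C) (hm : 0 < m) (ha : 1 ≤ a) :
    C / (m * a) ≤ C / (m * (a + 1)) + 3 * (C / (m * (a + 1) * (a + 2))) := by
  have ha0 : (0:ℝ) < a := by linarith
  have key : C / (m * (a + 1)) + 3 * (C / (m * (a + 1) * (a + 2)))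
      = (C * (a + 5)) / (m * (a + 1) * (a + 2)) := by
    field_simp
    ring
  rw [key, div_le_div_iff₀ (by positivity) (by positivity)]
  nlinarith [mul_nonneg (mul_nonneg hC hm.le) (by linarith : (0:ℝ) ≤ a - 1)]

/-- For `N ~ Poisson(α)`, one has `E[1/N ; N ≥ 1] = 1/α + O(α^{-3/2})`:
there is a constant `K` such that
`|∑_{k≥1} e^{-α} α^k / (k! k) - 1/α| ≤ K α^{-3/2}` for all `α ≥ 1`. -/
theorem poisson_inverse_expectation_asymptotics :
    ∃ K : ℝ, ∀ α : ℝ, 1 ≤ α →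
      |(∑' k : ℕ, Real.exp (-α) * α ^ (k + 1) / ((Nat.factorial (k + 1)) * (k + 1)))
          - 1 / α| ≤ K * α ^ (-(3 : ℝ) / 2) := by
  refine ⟨20, fun α hα => ?_⟩
  have hα0 : (0:ℝ) < α := lt_of_lt_of_le one_pos hα
  set u : ℕ → ℝ := fun n => α ^ n / n.factorial with hu_def
  have hu : Summable u := Real.summable_pow_div_factorial α
  have hue : ∑' n, u n = Real.exp α := by
    rw [Real.exp_eq_exp_ℝ, NormedSpace.exp_eq_tsum_div]
  set f : ℕ → ℝ := fun k =>
    Real.exp (-α) * α ^ (k + 1) / ((Nat.factorial (k + 1)) * (k + 1)) with hf_def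
  set g : ℕ → ℝ := fun k => Real.exp (-α) / α * u (k + 2) with hg_def
  set h : ℕ → ℝ := fun k => Real.exp (-α) / α ^ 2 * u (k + 3) with hh_def
  have hgC : ∀ k : ℕ, g k = Real.exp (-α) * α ^ (k + 1) / (Nat.factorial (k + 2)) := by
    intro k
    simp only [hg_def, hu_def]
    rw [pow_succ]
    field_simp
  have hhC : ∀ k : ℕ, h k = Real.exp (-α) * α ^ (k + 1) / (Nat.factorial (k + 3)) := by
    intro k
    simp only [hh_def, hu_def]
    have : α ^ (k + 3) = α ^ (k + 1) * α ^ 2 := by ring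
    rw [this]
    field_simp
  have hCpos : ∀ k : ℕ, 0 < Real.exp (-α) * α ^ (k + 1) := fun k => by positivity
  have hfact : ∀ k : ℕ, ((Nat.factorial (k+1) : ℝ)) > 0 := fun k => by positivity
  have hfg : ∀ k : ℕ, g k ≤ f k := by
    intro k
    rw [hgC k]
    apply div_le_div_of_nonneg_left (hCpos k).le (by positivity)
    have : (Nat.factorial (k+2) : ℝ) = (k+2) * Nat.factorial (k+1) := by
      rw [Nat.factorial_succ]; push_cast; ring
    rw [this]
    have hk1 : ((k:ℝ)+1) ≤ (k:ℝ)+2 := by linarith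
    calc (Nat.factorial (k+1) : ℝ) * ((k:ℝ)+1) ≤ (Nat.factorial (k+1) : ℝ) * ((k:ℝ)+2) := by
          apply mul_le_mul_of_nonneg_left hk1 (hfact k).le
      _ = ((k:ℝ)+2) * Nat.factorial (k+1) := by ring
  have hfu : ∀ k : ℕ, f k ≤ g k + 3 * h k := by
    intro k
    rw [hgC k, hhC k]
    have e2 : (Nat.factorial (k+2) : ℝ) = (Nat.factorial (k+1) : ℝ) * (((k:ℝ)+1) + 1) := by
      rw [Nat.factorial_succ]; push_cast; ring
    have e3 : (Nat.factorial (k+3) : ℝ) =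
        (Nat.factorial (k+1) : ℝ) * (((k:ℝ)+1) + 1) * (((k:ℝ)+1) + 2) := by
      rw [show k+3 = (k+2)+1 from rfl, Nat.factorial_succ, Nat.factorial_succ]
      push_cast; ring
    have hcast : f k = Real.exp (-α) * α ^ (k + 1) / ((Nat.factorial (k+1) : ℝ) * ((k:ℝ)+1)) := by
      simp only [hf_def]
    rw [hcast, e2, e3]
    exact ratio_ineq _ _ _ (hCpos k).le (hfact k)
      (by linarith [Nat.cast_nonneg (α := ℝ) k])
  have hsum_g : Summable g := (((summable_nat_add_iff 2).mpr hu).mul_left _)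
  have hsum_h : Summable h := (((summable_nat_add_iff 3).mpr hu).mul_left _)
  have hf_nonneg : ∀ k, 0 ≤ f k := fun k => by
    simp only [hf_def]; positivity
  have hsum_f : Summable f := by
    apply Summable.of_nonneg_of_le hf_nonneg (fun k => ?_)
      ((((summable_nat_add_iff 1).mpr hu).mul_left (Real.exp (-α))))
    simp only [hf_def, hu_def]
    have hrw : Real.exp (-α) * (α ^ (k + 1) / (Nat.factorial (k+1) : ℝ))
        = Real.exp (-α) * α ^ (k+1) / (Nat.factorial (k+1) : ℝ) := by ring
    rw [hrw]
    apply div_le_div_of_nonneg_left (hCpos k).le (hfact k)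
    nlinarith [hfact k, Nat.cast_nonneg (α := ℝ) k]
  have hshift2 : ∑' k : ℕ, u (k + 2) = Real.exp α - (1 + α) := by
    have h2 := Summable.sum_add_tsum_nat_add 2 hu
    rw [hue] at h2
    have hr : ∑ i ∈ Finset.range 2, u i = 1 + α := by
      simp [hu_def, Finset.sum_range_succ, Nat.factorial]
    rw [hr] at h2
    linarith
  have hshift3 : ∑' k : ℕ, u (k + 3) = Real.exp α - (1 + α + α^2/2) := by
    have h3 := Summable.sum_add_tsum_nat_add 3 hu
    rw [hue] at h3
    have hr : ∑ i ∈ Finset.range 3, u i = 1 + α + α^2/2 := by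
      simp [hu_def, Finset.sum_range_succ, Nat.factorial]
    rw [hr] at h3
    linarith
  have hG : ∑' k, g k = Real.exp (-α) / α * (Real.exp α - (1 + α)) := by
    simp only [hg_def]
    rw [tsum_mul_left, hshift2]
  have hH : ∑' k, h k = Real.exp (-α) / α ^ 2 * (Real.exp α - (1 + α + α^2/2)) := by
    simp only [hh_def]
    rw [tsum_mul_left, hshift3]
  have hexpinv : Real.exp (-α) * Real.exp α = 1 := by
    rw [← Real.exp_add]; simp
  have hEa_pos : 0 < Real.exp (-α) := Real.exp_pos _
  set S := ∑' k, f k with hS_def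
  have hlow : Real.exp (-α) / α * (Real.exp α - (1 + α)) ≤ S := by
    rw [← hG]; exact Summable.tsum_le_tsum hfg hsum_g hsum_f
  have hup : S ≤ Real.exp (-α) / α * (Real.exp α - (1 + α))
      + 3 * (Real.exp (-α) / α ^ 2 * (Real.exp α - (1 + α + α^2/2))) := by
    rw [← hG, ← hH, ← tsum_mul_left, ← Summable.tsum_add hsum_g (hsum_h.mul_left 3)]
    exact Summable.tsum_le_tsum hfu hsum_f (hsum_g.add (hsum_h.mul_left 3))
  have hGval : Real.exp (-α) / α * (Real.exp α - (1 + α))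
      = 1 / α - Real.exp (-α) * (1 + α) / α := by
    rw [div_mul_eq_mul_div, mul_sub, hexpinv]
    ring
  have hHle : Real.exp (-α) / α ^ 2 * (Real.exp α - (1 + α + α^2/2)) ≤ 1 / α ^ 2 := by
    rw [div_mul_eq_mul_div, mul_sub, hexpinv]
    apply div_le_div_of_nonneg_right ?_ (by positivity)
    nlinarith [mul_nonneg hEa_pos.le (by positivity : (0:ℝ) ≤ 1 + α + α^2/2)]
  have hfinal1 : 1 / α - S ≤ Real.exp (-α) * (1 + α) / α := by
    rw [hGval] at hlow; linarith
  have hfinal2 : S - 1 / α ≤ 3 / α ^ 2 := by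
    rw [hGval] at hup
    have hx : 0 ≤ Real.exp (-α) * (1 + α) / α := by positivity
    have h3a : (3:ℝ) / α ^ 2 = 3 * (1 / α ^ 2) := by ring
    rw [h3a]
    linarith
  have habs : |S - 1 / α| ≤ Real.exp (-α) * (1 + α) / α + 3 / α ^ 2 := by
    rw [abs_le]
    constructor
    · have hx : 0 ≤ Real.exp (-α) * (1 + α) / α := by positivity
      have hy : 0 ≤ 3 / α ^ 2 := by positivity
      linarith
    · have hx : 0 ≤ Real.exp (-α) * (1 + α) / α := by positivity
      linarith
  -- numeric estimates
  have hexp_half : α / 2 ≤ Real.exp (α / 2) := by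
    have := Real.add_one_le_exp (α / 2); linarith
  have hexp_sq : α ^ 2 / 4 ≤ Real.exp α := by
    have he : Real.exp α = Real.exp (α/2) * Real.exp (α/2) := by
      rw [← Real.exp_add]; ring_nf
    nlinarith [Real.exp_pos (α/2)]
  have hexp_le : Real.exp (-α) ≤ 4 / α ^ 2 := by
    have hmul : Real.exp (-α) * α ^ 2 ≤ 4 := by
      have h4 : α ^ 2 ≤ 4 * Real.exp α := by linarith
      calc Real.exp (-α) * α ^ 2 ≤ Real.exp (-α) * (4 * Real.exp α) := by
            apply mul_le_mul_of_nonneg_left h4 hEa_pos.le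
        _ = 4 := by rw [show Real.exp (-α) * (4 * Real.exp α) = 4 * (Real.exp (-α) * Real.exp α) from by ring, hexpinv]; ring
    rw [le_div_iff₀ (by positivity)]
    linarith
  have h1 : Real.exp (-α) * (1 + α) / α ≤ 2 * Real.exp (-α) := by
    rw [div_le_iff₀ hα0]
    nlinarith [hEa_pos]
  have h3 : (1:ℝ) / α ^ 2 ≤ α ^ (-(3:ℝ)/2) := by
    have e : (1:ℝ) / α ^ 2 = α ^ ((-2:ℝ)) := by
      rw [show ((-2:ℝ)) = -(2:ℕ) from by norm_num, Real.rpow_neg hα0.le, Real.rpow_natCast]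
      rw [one_div]
    rw [e]
    exact Real.rpow_le_rpow_of_exponent_le hα (by norm_num)
  have hrpow_nonneg : 0 ≤ α ^ (-(3:ℝ)/2) := Real.rpow_nonneg hα0.le _
  calc |S - 1/α| ≤ Real.exp (-α) * (1 + α) / α + 3 / α ^ 2 := habs
    _ ≤ 2 * (4 / α ^ 2) + 3 / α ^ 2 := by linarith
    _ = 11 * (1 / α ^ 2) := by ring
    _ ≤ 11 * α ^ (-(3:ℝ)/2) := by linarith
    _ ≤ 20 * α ^ (-(3:ℝ)/2) := by linarith
end

section
/- Let W_1, ..., W_{N-1} be a lazy one-dimensional random walk whose i.i.d. increments take value +a with probability 1/(2n), -a with probability 1/(2n), and 0 with probability (n-1)/n, where a > 0. Then P(|W_{N-1}| < a) <= 10 n / sqrt(N) for all N > 2. -/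
/-!
Expanding the `N - 1` i.i.d. steps shows that `P(|W| < a)` is the constant coefficient of
`((r/2) T + (r/2) T⁻¹ + (1 - r))^(N-1)` with `r = 1/n`. Grouping by the number `m` of non-zero
steps, that coefficient is `E[C(M, M/2) 2^(-M); M even]` for `M ~ Bin(N-1, r)`, and
`C(2j, j) ≤ 4^j / √(j+1)` bounds it by `√2 · E[(M+1)^(-1/2)]`. By Jensen this is at most
`√2 · √(E[1/(M+1)]) ≤ √(2 / (N r)) = √(2n/N)`.
-/

open MeasureTheory ProbabilityTheory Finset
open scoped NNReal ENNReal

namespace Nat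

theorem centralBinom_sq_mul_succ_le (j : ℕ) : centralBinom j ^ 2 * (j + 1) ≤ 16 ^ j := by
  induction j with
  | zero => simp
  | succ j ih =>
    refine Nat.le_of_mul_le_mul_left ?_ (by positivity : 0 < (j + 1) ^ 2)
    calc (j + 1) ^ 2 * (centralBinom (j + 1) ^ 2 * (j + 1 + 1))
        = ((j + 1) * centralBinom (j + 1)) ^ 2 * (j + 2) := by ring
      _ = (2 * (2 * j + 1)) ^ 2 * (j + 2) * centralBinom j ^ 2 := by
        rw [succ_mul_centralBinom_succ]; ring
      _ ≤ 16 * (j + 1) ^ 2 * (centralBinom j ^ 2 * (j + 1)) := by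
        nlinarith [sq_nonneg (centralBinom j)]
      _ ≤ 16 * (j + 1) ^ 2 * 16 ^ j := Nat.mul_le_mul_left _ ih
      _ = (j + 1) ^ 2 * 16 ^ (j + 1) := by ring

theorem centralBinom_mul_sqrt_succ_le (j : ℕ) : (centralBinom j : ℝ) * √(j + 1) ≤ 4 ^ j := by
  rw [← Real.sqrt_sq (by positivity : (0 : ℝ) ≤ centralBinom j), ← Real.sqrt_mul (by positivity),
    ← Real.sqrt_sq (by positivity : (0 : ℝ) ≤ 4 ^ j)]
  refine Real.sqrt_le_sqrt ?_
  rw [← pow_mul, mul_comm j, pow_mul]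
  exact_mod_cast centralBinom_sq_mul_succ_le j

end Nat

theorem succ_mul_sum_choose_mul_pow_div_succ (r : ℝ) (k : ℕ) :
    (k + 1) * r * ∑ m ∈ range (k + 1), k.choose m * r ^ m * (1 - r) ^ (k - m) / (m + 1)
      = 1 - (1 - r) ^ (k + 1) := by
  have hbinom := (add_pow r (1 - r) (k + 1)).symm
  rw [add_sub_cancel, one_pow, sum_range_succ'] at hbinom
  simp only [pow_zero, one_mul, Nat.choose_zero_right, Nat.cast_one, mul_one, Nat.sub_zero,
    Nat.add_sub_add_right] at hbinom
  refine Eq.trans ?_ (eq_sub_of_add_eq hbinom)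
  rw [mul_sum]
  refine sum_congr rfl fun m _ => ?_
  have hchoose : ((k + 1 : ℕ) : ℝ) * k.choose m = (k + 1).choose (m + 1) * (m + 1 : ℕ) := by
    exact_mod_cast Nat.add_one_mul_choose_eq k m
  push_cast at hchoose
  field_simp
  linear_combination r ^ (m + 1) * (1 - r) ^ (k - m) * hchoose

theorem sum_choose_mul_pow_mul_sqrt_one_div_succ_le {r : ℝ} (hr0 : 0 < r) (hr1 : r ≤ 1) (k : ℕ) :
    ∑ m ∈ range (k + 1), k.choose m * r ^ m * (1 - r) ^ (k - m) * √(1 / (m + 1))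
      ≤ √(1 / ((k + 1) * r)) := by
  set w : ℕ → ℝ := fun m => k.choose m * r ^ m * (1 - r) ^ (k - m)
  have hw : ∀ m ∈ range (k + 1), 0 ≤ w m := fun m _ => by
    have : 0 ≤ 1 - r := by linarith
    positivity
  have hw1 : ∑ m ∈ range (k + 1), w m = 1 := by
    have hbinom := (add_pow r (1 - r) k).symm
    rw [add_sub_cancel, one_pow] at hbinom
    rw [← hbinom]
    exact sum_congr rfl fun m _ => by ring
  have hmean : ∑ m ∈ range (k + 1), w m * (1 / (m + 1)) ≤ 1 / ((k + 1) * r) := by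
    have hid := succ_mul_sum_choose_mul_pow_div_succ r k
    rw [le_div_iff₀ (by positivity)]
    have : 0 ≤ (1 - r) ^ (k + 1) := pow_nonneg (by linarith) _
    simp only [mul_one_div]
    linarith
  calc ∑ m ∈ range (k + 1), w m * √(1 / (m + 1))
      ≤ √(∑ m ∈ range (k + 1), w m * (1 / (m + 1))) :=
        Real.strictConcaveOn_sqrt.concaveOn.le_map_sum hw hw1 fun m _ => by
          simp only [Set.mem_Ici]; positivity
    _ ≤ √(1 / ((k + 1) * r)) := Real.sqrt_le_sqrt hmean

namespace AddMonoidAlgebra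

variable {R : Type*} [CommSemiring R]

theorem coeff_prod_sum_single {G ι α : Type*} [AddCommMonoid G] [DecidableEq G] [Fintype ι]
    [DecidableEq ι] [Fintype α] (e : α → G) (w : α → R) (g : G) :
    (∏ _i : ι, ∑ t, single (e t) (w t)).coeff g
      = ∑ s : ι → α with ∑ i, e (s i) = g, ∏ i, w (s i) := by
  rw [Fintype.prod_sum, coeff_sum, Finsupp.finsetSum_apply, sum_filter]
  refine sum_congr rfl fun s _ => ?_
  rw [prod_single, coeff_single, Finsupp.single_apply]

theorem coeff_zero_single_one_add_single_neg_one_pow (m : ℕ) :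
    ((single (1 : ℤ) (1 : R) + single (-1) 1) ^ m).coeff 0
      = if Even m then ((m / 2).centralBinom : R) else 0 := by
  rw [(Commute.all _ _).add_pow', coeff_sum, Finsupp.finsetSum_apply]
  simp only [single_pow, single_mul_single, coeff_smul_apply, coeff_single, Finsupp.single_apply,
    one_pow, mul_one]
  have hcond : ∀ p : ℕ × ℕ, (p.1 • (1 : ℤ) + p.2 • (-1) = 0 ↔ p.1 = p.2) := fun p => by
    simp only [nsmul_eq_mul, mul_one, mul_neg]
    omega
  simp_rw [hcond, smul_ite, smul_zero, nsmul_eq_mul, mul_one]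
  split_ifs with hm
  · obtain ⟨j, rfl⟩ := hm
    rw [sum_eq_single (j, j), if_pos rfl, show (j + j) / 2 = j by omega, Nat.centralBinom,
      two_mul]
    · rintro ⟨i, i'⟩ hp hne
      rw [HasAntidiagonal.mem_antidiagonal] at hp
      exact if_neg fun h => hne (by simp only at h hp; rw [Prod.mk.injEq]; omega)
    · simp
  · refine sum_eq_zero fun p hp => if_neg fun h => hm ⟨p.1, ?_⟩
    rw [HasAntidiagonal.mem_antidiagonal] at hp
    omega

theorem coeff_zero_single_one_add_single_neg_one_pow_le (m : ℕ) :
    ((single (1 : ℤ) (1 : ℝ) + single (-1) 1) ^ m).coeff 0 ≤ 2 ^ m * √(2 / (m + 1)) := by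
  rw [coeff_zero_single_one_add_single_neg_one_pow]
  split_ifs with hm
  · obtain ⟨j, rfl⟩ := hm
    have hsqrt : 0 < √((j : ℝ) + 1) := by positivity
    calc ((j + j) / 2).centralBinom = (j.centralBinom : ℝ) := by rw [show (j + j) / 2 = j by omega]
      _ ≤ 2 ^ (j + j) * √(1 / (j + 1)) := by
        rw [← two_mul, pow_mul, one_div, Real.sqrt_inv, ← div_eq_mul_inv, le_div_iff₀ hsqrt]
        norm_num [Nat.centralBinom_mul_sqrt_succ_le j]
      _ ≤ 2 ^ (j + j) * √(2 / ((j + j : ℕ) + 1)) := by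
        refine mul_le_mul_of_nonneg_left (Real.sqrt_le_sqrt ?_) (by positivity)
        push_cast
        rw [div_le_div_iff₀ (by positivity) (by positivity)]
        linarith
  · positivity

end AddMonoidAlgebra

open AddMonoidAlgebra

/-- Generating function of one step of the walk, measured in units of `a` (here `r = 1/n`). -/
noncomputable def lazyStep (r : ℝ) : AddMonoidAlgebra ℝ ℤ :=
  single 1 (r / 2) + single (-1) (r / 2) + single 0 (1 - r)

theorem coeff_zero_lazyStep_pow_le {r : ℝ} (hr0 : 0 < r) (hr1 : r ≤ 1) (k : ℕ) :
    (lazyStep r ^ k).coeff 0 ≤ √(2 / ((k + 1) * r)) := by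
  set u : AddMonoidAlgebra ℝ ℤ := single 1 1 + single (-1) 1
  have hstep : lazyStep r = (r / 2) • u + single 0 (1 - r) := by
    simp only [lazyStep, u, smul_add, smul_single', mul_one]
  have hcoeff : ∀ m ∈ range (k + 1), (((r / 2) • u) ^ m * single 0 (1 - r) ^ (k - m)
      * (k.choose m : AddMonoidAlgebra ℝ ℤ)).coeff 0
      ≤ k.choose m * r ^ m * (1 - r) ^ (k - m) * (√2 * √(1 / (m + 1))) := by
    intro m _
    rw [smul_pow, single_pow, natCast_def, coeff_mul_single_zero, smul_zero,
      coeff_mul_single_zero, coeff_smul_apply, smul_eq_mul, ← Real.sqrt_mul zero_le_two, mul_one_div]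
    have : 0 ≤ 1 - r := by linarith
    calc (r / 2) ^ m * (u ^ m).coeff 0 * (1 - r) ^ (k - m) * k.choose m
        ≤ (r / 2) ^ m * (2 ^ m * √(2 / (m + 1))) * (1 - r) ^ (k - m) * k.choose m := by
          gcongr
          exact coeff_zero_single_one_add_single_neg_one_pow_le m
      _ = _ := by rw [div_pow]; field_simp
  calc (lazyStep r ^ k).coeff 0
      ≤ ∑ m ∈ range (k + 1), k.choose m * r ^ m * (1 - r) ^ (k - m) * (√2 * √(1 / (m + 1))) := by
        rw [hstep, add_pow, coeff_sum, Finsupp.finsetSum_apply]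
        exact sum_le_sum hcoeff
    _ ≤ √2 * √(1 / ((k + 1) * r)) := by
        simp only [mul_left_comm _ √2, ← mul_sum]
        gcongr
        exact sum_choose_mul_pow_mul_sqrt_one_div_succ_le hr0 hr1 k
    _ = √(2 / ((k + 1) * r)) := by rw [← Real.sqrt_mul zero_le_two, mul_one_div]

theorem MeasureTheory.Measure.pi_sum_smul_dirac {ι α β : Type*} [Fintype ι] [DecidableEq ι]
    [Fintype α] [MeasurableSpace β] (c : α → ℝ≥0∞) (hc : ∀ t, c t ≠ ∞) (v : α → β) :
    Measure.pi (fun _ : ι => ∑ t, c t • dirac (v t))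
      = ∑ s : ι → α, (∏ i, c (s i)) • dirac (fun i => v (s i)) := by
  have (t : α) : IsFiniteMeasure (c t • dirac (v t)) := (dirac (v t)).smul_finite (hc t)
  refine Measure.pi_eq fun S hS => ?_
  simp only [Measure.coe_finsetSum, Measure.coe_smul, Finset.sum_apply, Pi.smul_apply,
    smul_eq_mul, Fintype.prod_sum]
  refine Finset.sum_congr rfl fun s _ => ?_
  rw [prod_mul_distrib]
  congr 1
  by_cases hmem : (fun i => v (s i)) ∈ Set.univ.pi S
  · rw [dirac_apply_of_mem hmem]
    exact (prod_eq_one fun i _ => dirac_apply_of_mem (hmem i trivial)).symm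
  · obtain ⟨i, hi⟩ : ∃ i, v (s i) ∉ S i := by simpa [Set.mem_univ_pi] using hmem
    rw [dirac_apply' _ (.univ_pi hS), Set.indicator_of_notMem hmem]
    refine (prod_eq_zero (mem_univ i) ?_).symm
    rw [dirac_apply' _ (hS i), Set.indicator_of_notMem hi]

open Classical in
theorem ProbabilityTheory.iIndepFun.measure_preimage_eq_sum_prod {Ω ι α β : Type*}
    [MeasurableSpace Ω] [Fintype ι] [DecidableEq ι] [Fintype α] [MeasurableSpace β]
    {P : Measure Ω} {X : ι → Ω → β} (hmeas : ∀ i, Measurable (X i)) (hindep : iIndepFun X P)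
    (c : α → ℝ≥0∞) (hc : ∀ t, c t ≠ ∞) (v : α → β)
    (hlaw : ∀ i, P.map (X i) = ∑ t, c t • Measure.dirac (v t)) {S : Set (ι → β)}
    (hS : MeasurableSet S) :
    P ((fun ω i => X i ω) ⁻¹' S) = ∑ s : ι → α with (fun i => v (s i)) ∈ S, ∏ i, c (s i) := by
  rw [← Measure.map_apply (measurable_pi_lambda _ hmeas) hS,
    hindep.map_fun_eq_pi_map fun i => (hmeas i).aemeasurable, funext hlaw,
    Measure.pi_sum_smul_dirac c hc v, sum_filter]
  simp only [Measure.coe_finsetSum, Measure.coe_smul, Finset.sum_apply, Pi.smul_apply,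
    smul_eq_mul, Measure.dirac_apply' _ hS, Set.indicator_apply, Pi.one_apply, mul_ite, mul_one,
    mul_zero]

theorem measure_abs_sum_lt_eq_coeff_zero_lazyStep_pow {Ω ι : Type*} [MeasurableSpace Ω]
    [Fintype ι] {P : Measure Ω} {X : ι → Ω → ℝ} (hmeas : ∀ i, Measurable (X i))
    (hindep : iIndepFun X P) {a r : ℝ} (ha : 0 < a) (hr0 : 0 ≤ r) (hr1 : r ≤ 1)
    (hlaw : ∀ i, P.map (X i) = ENNReal.ofReal (r / 2) • Measure.dirac a
      + ENNReal.ofReal (r / 2) • Measure.dirac (-a) + ENNReal.ofReal (1 - r) • Measure.dirac 0) :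
    (P {ω | |∑ i, X i ω| < a}).toReal = (lazyStep r ^ Fintype.card ι).coeff 0 := by
  classical
  let e : Fin 3 → ℤ := ![1, -1, 0]
  let w : Fin 3 → ℝ := ![r / 2, r / 2, 1 - r]
  have hw (t : Fin 3) : 0 ≤ w t := by fin_cases t <;> simp [w] <;> linarith
  have hlaw' (i : ι) : P.map (X i) = ∑ t, ENNReal.ofReal (w t) • Measure.dirac (a * e t) := by
    simp [Fin.sum_univ_three, hlaw, e, w]
  have hstep : lazyStep r = ∑ t, single (e t) (w t) := by
    simp [lazyStep, Fin.sum_univ_three, e, w]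
  have hS : MeasurableSet {x : ι → ℝ | |∑ i, x i| < a} :=
    measurableSet_lt (by fun_prop) measurable_const
  have hzero (s : ι → Fin 3) : |∑ i, a * e (s i)| < a ↔ ∑ i, e (s i) = 0 := by
    rw [← mul_sum, abs_mul, abs_of_pos ha, mul_lt_iff_lt_one_right ha, ← Int.cast_sum,
      ← Int.cast_abs, ← Int.cast_one, Int.cast_lt, Int.abs_lt_one_iff]
  rw [hstep, ← card_univ, ← prod_const, coeff_prod_sum_single,
    show {ω | |∑ i, X i ω| < a} = (fun ω i => X i ω) ⁻¹' {x | |∑ i, x i| < a} from rfl,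
    hindep.measure_preimage_eq_sum_prod hmeas _ (fun _ => ENNReal.ofReal_ne_top) _ hlaw' hS,
    ENNReal.toReal_sum fun s _ => ENNReal.prod_ne_top fun _ _ => ENNReal.ofReal_ne_top]
  refine sum_congr (filter_congr fun s _ => hzero s) fun s _ => ?_
  rw [ENNReal.toReal_prod]
  exact prod_congr rfl fun i _ => ENNReal.toReal_ofReal (hw (s i))

theorem lazy_walk_small_ball_general
    {Ω : Type*} [MeasurableSpace Ω] (P : Measure Ω)
    (n N : ℕ) (hn : 0 < n) (hN : 2 < N) (a : ℝ) (ha : 0 < a)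
    (X : Fin (N - 1) → Ω → ℝ)
    (hmeas : ∀ i, Measurable (X i))
    (hindep : iIndepFun X P)
    (hlaw : ∀ i, Measure.map (X i) P
      = (ENNReal.ofReal (1 / (2 * n))) • Measure.dirac a
        + (ENNReal.ofReal (1 / (2 * n))) • Measure.dirac (-a)
        + (ENNReal.ofReal ((n - 1) / n)) • Measure.dirac 0) :
    (P {ω | |∑ i, X i ω| < a}).toReal ≤ 10 * n / Real.sqrt N := by
  have hn1 : (1 : ℝ) ≤ n := by exact_mod_cast hn
  have hr0 : (0 : ℝ) < 1 / n := by positivity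
  have hr1 : (1 : ℝ) / n ≤ 1 := (div_le_one (by positivity)).mpr hn1
  have hlaw' (i : Fin (N - 1)) : P.map (X i) = ENNReal.ofReal (1 / n / 2) • Measure.dirac a
      + ENNReal.ofReal (1 / n / 2) • Measure.dirac (-a)
      + ENNReal.ofReal (1 - 1 / n) • Measure.dirac 0 := by
    rw [hlaw i, div_div, mul_comm (n : ℝ), sub_div, div_self (by positivity)]
  have hN1 : ((N - 1 : ℕ) : ℝ) + 1 = N := by
    rw [Nat.cast_sub (by omega), Nat.cast_one, sub_add_cancel]
  calc (P {ω | |∑ i, X i ω| < a}).toReal = (lazyStep (1 / n) ^ (N - 1)).coeff 0 := by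
        rw [measure_abs_sum_lt_eq_coeff_zero_lazyStep_pow hmeas hindep ha hr0.le hr1 hlaw',
          Fintype.card_fin]
    _ ≤ √(2 / (((N - 1 : ℕ) + 1) * (1 / n))) := coeff_zero_lazyStep_pow_le hr0 hr1 _
    _ = √(2 * n) / √N := by
        rw [hN1, ← Real.sqrt_div' _ (Nat.cast_nonneg N)]
        field_simp
    _ ≤ 10 * n / √N := by
        gcongr
        rw [Real.sqrt_le_left (by positivity)]
        nlinarith

/-- For a lazy one-dimensional random walk of length `N-1` whose i.i.d. increments are
`+a` with probability `1/(2n)`, `-a` with probability `1/(2n)` and `0` with probability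
`(n-1)/n`, the probability of ending within distance `a` of the origin is at most
`10 n / √N` for `N > 2`. -/
theorem lazy_walk_small_ball
    {Ω : Type*} [MeasurableSpace Ω] (P : Measure Ω) [IsProbabilityMeasure P]
    (n N : ℕ) (hn : 0 < n) (hN : 2 < N) (a : ℝ) (ha : 0 < a)
    (X : Fin (N - 1) → Ω → ℝ)
    (hmeas : ∀ i, Measurable (X i))
    (hindep : iIndepFun X P)
    (hlaw : ∀ i, Measure.map (X i) P
      = (ENNReal.ofReal (1 / (2 * n))) • Measure.dirac a
        + (ENNReal.ofReal (1 / (2 * n))) • Measure.dirac (-a)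
        + (ENNReal.ofReal ((n - 1) / n)) • Measure.dirac 0) :
    (P {ω | |∑ i, X i ω| < a}).toReal ≤ 10 * n / Real.sqrt N :=
  lazy_walk_small_ball_general P n N hn hN a ha X hmeas hindep hlaw
end

section
/- Let S_0 = 0, S_1, ..., S_N be a one-dimensional random walk with i.i.d. increments taking values in a finite symmetric set, conditioned on S_N = 0. Let Z_i be the event that the walk attains its minimum value exactly i times among the indices 1, ..., N. Then P({S_j >= 0 for all 1 <= j <= N} ∩ Z_i | S_N = 0) <= i/N for each i >= 1. -/
/-!
If the increments `x` of a walk sum to zero, the walk driven by the cyclic shift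
`a ↦ x (k + a)` is `j ↦ S (k + j) - S k` with indices read mod `N`. It is therefore nonnegative
exactly when `S` attains its minimum at time `k`, and it attains its own minimum as often as `S`
does. So if `S` attains its minimum `i` times, at most `i` of the `N` shifts lie in the event.
Since i.i.d. increments have a law invariant under cyclic shifts, averaging the indicator of the
event over the `N` shifts bounds its conditional probability by `i / N`.
-/

open Finset

namespace RandomWalk

open Fin.NatCast

section PartialSums

variable {M : Type*} {N : ℕ}

def partialSum [AddCommMonoid M] (x : Fin N → M) (j : ℕ) : M :=
  ∑ i ∈ univ.filter (fun i : Fin N => (i : ℕ) < j), x i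

/-- `(m : Fin N)` is `m % N`, so this is the walk with the increments repeated periodically. -/
def periodicSum [AddCommMonoid M] [NeZero N] (x : Fin N → M) (n : ℕ) : M :=
  ∑ m ∈ range n, x (m : Fin N)

def cyclicShift (k : Fin N) (x : Fin N → M) : Fin N → M :=
  fun a => x (k + a)

def bridgeSet [AddCommMonoid M] (N : ℕ) : Set (Fin N → M) := {x | partialSum x N = 0}

theorem partialSum_self [AddCommMonoid M] (x : Fin N → M) : partialSum x N = ∑ a, x a := by
  rw [partialSum, filter_true_of_mem fun a _ => a.is_lt]

variable [NeZero N]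

theorem sum_cyclicShift [AddCommMonoid M] (x : Fin N → M) (k : Fin N) :
    ∑ a, cyclicShift k x a = ∑ a, x a :=
  Fintype.sum_equiv (Equiv.addLeft k) _ _ fun _ => rfl

theorem cyclicShift_mem_bridgeSet_iff [AddCommMonoid M] {x : Fin N → M} (k : Fin N) :
    cyclicShift k x ∈ bridgeSet N ↔ x ∈ bridgeSet N := by
  simp [bridgeSet, partialSum_self, sum_cyclicShift]

theorem partialSum_eq_periodicSum [AddCommMonoid M] (x : Fin N → M) {j : ℕ} (hj : j ≤ N) :
    partialSum x j = periodicSum x j := by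
  have h := Fin.sum_univ_eq_sum_range (fun m => if m < j then x (m : Fin N) else 0) N
  simp only [Fin.cast_val_eq_self, ← sum_filter] at h
  rw [partialSum, h, periodicSum]
  congr 1
  ext m
  simp only [mem_filter, mem_range]
  omega

theorem periodicSum_add [AddCommMonoid M] (x : Fin N → M) (n m : ℕ) :
    periodicSum x (n + m) = periodicSum x n + ∑ l ∈ range m, x (n + l : Fin N) := by
  simp only [periodicSum, sum_range_add, Nat.cast_add]

theorem periodicSum_periodic [AddCommMonoid M] {x : Fin N → M} (hx : ∑ a, x a = 0) :
    Function.Periodic (periodicSum x) N := fun n => by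
  rw [periodicSum_add, ← Fin.sum_univ_eq_sum_range (fun l => x (n + l : Fin N)),
    Fintype.sum_equiv (Equiv.addLeft (n : Fin N)) _ x (fun a => by simp), hx, add_zero]

theorem periodicSum_cyclicShift [AddCommGroup M] (x : Fin N → M) (k : Fin N) (n : ℕ) :
    periodicSum (cyclicShift k x) n = periodicSum x (k + n) - periodicSum x k := by
  rw [periodicSum_add, add_sub_cancel_left]
  simp only [periodicSum, cyclicShift, Fin.cast_val_eq_self]

theorem partialSum_cyclicShift [AddCommGroup M] {x : Fin N → M} (hx : ∑ a, x a = 0) (k : Fin N)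
    {j : ℕ} (hj : j ≤ N) :
    partialSum (cyclicShift k x) j = partialSum x ↑(k + (j : Fin N)) - partialSum x k := by
  rw [partialSum_eq_periodicSum _ hj, periodicSum_cyclicShift,
    ← (periodicSum_periodic hx).map_mod_nat, partialSum_eq_periodicSum _ (k + (j : Fin N)).is_lt.le,
    partialSum_eq_periodicSum _ k.is_lt.le]
  simp [Fin.val_add, Fin.val_natCast]

end PartialSums

section Minimizers

variable {G M : Type*} [LinearOrder M]

def minimizers [Fintype G] (s : G → M) : Finset G := univ.filter fun a => ∀ b, s a ≤ s b

variable [AddCommGroup M] [IsOrderedAddMonoid M]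

theorem forall_nonneg_comp_sub_iff (s : G → M) (e : G ≃ G) (c : M) :
    (∀ a, 0 ≤ s (e a) - c) ↔ ∀ b, c ≤ s b := by
  simpa using e.forall_congr_right (q := fun b => c ≤ s b)

variable [Fintype G]

theorem card_minimizers_comp_sub (s : G → M) (e : G ≃ G) (c : M) :
    #(minimizers fun a => s (e a) - c) = #(minimizers s) :=
  card_equiv e fun a => by
    simpa [minimizers] using e.forall_congr_right (q := fun b => s (e a) ≤ s b)

theorem ncard_nonneg_and_card_minimizers_eq_le (s : G → M) (e : G → G ≃ G) (i : ℕ) :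
    {k | (∀ a, 0 ≤ s (e k a) - s k) ∧ #(minimizers fun a => s (e k a) - s k) = i}.ncard ≤ i := by
  simp_rw [forall_nonneg_comp_sub_iff, card_minimizers_comp_sub]
  by_cases hi : #(minimizers s) = i
  · calc _ ≤ (minimizers s : Set G).ncard :=
          Set.ncard_le_ncard fun k hk => by simpa [minimizers] using hk.1
      _ = i := by rw [Set.ncard_coe_finset, hi]
  · simp [hi]

end Minimizers

section Paths

variable {M : Type*} [LinearOrder M] {N : ℕ}

def nonnegPathSet [AddCommMonoid M] (N : ℕ) : Set (Fin N → M) :=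
  {x | ∀ j ∈ Icc 1 N, 0 ≤ partialSum x j}

def minCountSet [AddCommMonoid M] (hN : 0 < N) (i : ℕ) : Set (Fin N → M) :=
  {x | #{j ∈ Icc 1 N | partialSum x j = (Icc 1 N).inf' (nonempty_Icc.mpr hN) (partialSum x)} = i}

theorem map_univ_val_add_one :
    (univ : Finset (Fin N)).map (Fin.valEmbedding.trans (addRightEmbedding 1)) = Icc 1 N := by
  ext j
  simp only [mem_map, mem_univ, true_and, Function.Embedding.trans_apply, Fin.valEmbedding_apply,
    addRightEmbedding_apply, mem_Icc]
  exact ⟨by rintro ⟨a, rfl⟩; omega, fun h => ⟨⟨j - 1, by omega⟩, by simp; omega⟩⟩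

theorem forall_Icc_one_iff (p : ℕ → Prop) : (∀ j ∈ Icc 1 N, p j) ↔ ∀ a : Fin N, p (a + 1) := by
  simp [← map_univ_val_add_one]

theorem card_filter_eq_inf'_Icc (hN : 0 < N) (f : ℕ → M) :
    #{j ∈ Icc 1 N | f j = (Icc 1 N).inf' (nonempty_Icc.mpr hN) f} =
      #(minimizers fun a : Fin N => f (a + 1)) := by
  have hmin : ∀ j ∈ Icc 1 N,
      f j = (Icc 1 N).inf' (nonempty_Icc.mpr hN) f ↔ ∀ l ∈ Icc 1 N, f j ≤ f l :=
    fun j hj => ⟨fun h l hl => h ▸ inf'_le f hl,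
      fun h => le_antisymm ((le_inf'_iff _ _).2 h) (inf'_le f hj)⟩
  rw [filter_congr hmin, ← map_univ_val_add_one, filter_map, card_map]
  simp [minimizers]

theorem ncard_cyclicShift_mem_le [AddCommGroup M] [IsOrderedAddMonoid M] (hN : 0 < N)
    {x : Fin N → M} (hx : x ∈ bridgeSet N) (i : ℕ) :
    {k | cyclicShift k x ∈ nonnegPathSet N ∩ minCountSet hN i}.ncard ≤ i := by
  have : NeZero N := ⟨hN.ne'⟩
  have hsum : ∑ a, x a = 0 := by rwa [bridgeSet, Set.mem_ofPred_eq, partialSum_self] at hx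
  let s : Fin N → M := fun b => partialSum x b
  let e : Fin N → Fin N ≃ Fin N := fun k => (Equiv.addRight 1).trans (Equiv.addLeft k)
  have hwalk : ∀ k (a : Fin N), partialSum (cyclicShift k x) (a + 1) = s (e k a) - s k := by
    intro k a
    rw [partialSum_cyclicShift hsum k a.is_lt]
    simp [s, e, Fin.cast_val_eq_self]
  calc {k | cyclicShift k x ∈ nonnegPathSet N ∩ minCountSet hN i}.ncard
      = {k | (∀ a, 0 ≤ s (e k a) - s k) ∧ #(minimizers fun a => s (e k a) - s k) = i}.ncard := by
        congr 1
        ext k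
        simp only [Set.mem_inter_iff, nonnegPathSet, minCountSet, Set.mem_ofPred_eq,
          forall_Icc_one_iff, card_filter_eq_inf'_Icc hN, hwalk]
    _ ≤ i := ncard_nonneg_and_card_minimizers_eq_le s e i

end Paths

section Measure

open MeasureTheory ProbabilityTheory
open scoped ENNReal

theorem cond_preimage_eq_cond_map {Ω β : Type*} [MeasurableSpace Ω] [MeasurableSpace β]
    {P : Measure Ω} {Y : Ω → β} (hY : Measurable Y) {B E : Set β} (hB : MeasurableSet B)
    (hE : MeasurableSet E) :
    P[Y ⁻¹' E | Y ⁻¹' B] = (P.map Y)[E | B] := by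
  rw [cond_apply (hY hB), cond_apply hB, Measure.map_apply hY hB,
    Measure.map_apply hY (hB.inter hE), Set.preimage_inter]

section CyclicAveraging

variable {α ι : Type*} [MeasurableSpace α] [Fintype ι] {ν : Measure α} {T : ι → α → α}
  {B E : Set α} {c : ℕ}

theorem card_mul_measure_le_of_ncard_le (hT : ∀ k, MeasurePreserving (T k) ν ν)
    (hE : MeasurableSet E) (hEB : ∀ k x, T k x ∈ E → x ∈ B)
    (hc : ∀ x ∈ B, {k | T k x ∈ E}.ncard ≤ c) :
    Fintype.card ι * ν E ≤ c * ν B := by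
  have hcount : ∀ x, ∑ k, (T k ⁻¹' E).indicator 1 x ≤ B.indicator (fun _ => (c : ℝ≥0∞)) x := by
    intro x
    classical
    simp only [Set.indicator_apply, Set.mem_preimage, Pi.one_apply, sum_boole]
    rw [← Set.ncard_coe_finset, coe_filter_univ]
    by_cases hx : x ∈ B
    · simpa [hx] using hc x hx
    · simp [hx, fun k => mt (hEB k x) hx]
  calc Fintype.card ι * ν E = ∑ k, ν (T k ⁻¹' E) := by
        simp [(hT _).measure_preimage hE.nullMeasurableSet]
    _ = ∫⁻ x, ∑ k, (T k ⁻¹' E).indicator 1 x ∂ν := by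
        rw [lintegral_finsetSum _ fun k _ => measurable_one.indicator ((hT k).measurable hE)]
        simp [lintegral_indicator_one ((hT _).measurable hE)]
    _ ≤ ∫⁻ x, B.indicator (fun _ => (c : ℝ≥0∞)) x ∂ν := lintegral_mono hcount
    _ ≤ c * ν B := lintegral_indicator_const_le B c

theorem cond_le_div_card [Nonempty ι] (hT : ∀ k, MeasurePreserving (T k) ν ν)
    (hB : MeasurableSet B) (hTB : ∀ k x, T k x ∈ B → x ∈ B) (hE : MeasurableSet E)
    (hc : ∀ x ∈ B, {k | T k x ∈ E}.ncard ≤ c) :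
    ν[E | B] ≤ c / Fintype.card ι := by
  by_cases hB0 : ν B = ∞ ∨ ν B = 0
  · simp [cond_eq_zero.2 hB0]
  rw [not_or] at hB0
  have hBE := card_mul_measure_le_of_ncard_le hT (hB.inter hE) (fun k x hx => hTB k x hx.1)
    fun x hx => (Set.ncard_le_ncard (fun k hk => hk.2)).trans (hc x hx)
  rw [cond_apply hB]
  calc (ν B)⁻¹ * ν (B ∩ E) ≤ (ν B)⁻¹ * (c * ν B / Fintype.card ι) := by
        gcongr
        rw [ENNReal.le_div_iff_mul_le (by simp) (by simp), mul_comm]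
        exact hBE
    _ = c / Fintype.card ι := by
        rw [mul_comm (c : ℝ≥0∞), mul_div_assoc, ← mul_assoc, ENNReal.inv_mul_cancel hB0.2 hB0.1,
          one_mul]

end CyclicAveraging

variable {N : ℕ}

theorem measurePreserving_cyclicShift {β : Type*} [MeasurableSpace β] [NeZero N]
    (μ : Measure β) [SigmaFinite μ] (k : Fin N) :
    MeasurePreserving (cyclicShift k) (Measure.pi fun _ => μ) (Measure.pi fun _ => μ) := by
  convert measurePreserving_piCongrLeft (fun _ : Fin N => μ) (Equiv.addLeft k).symm
  ext x a
  simp [cyclicShift, MeasurableEquiv.coe_piCongrLeft, Equiv.piCongrLeft_apply_eq_cast]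

theorem measurable_partialSum (j : ℕ) : Measurable fun x : Fin N → ℝ => partialSum x j :=
  Finset.measurable_sum _ fun i _ => measurable_pi_apply i

theorem measurableSet_bridgeSet : MeasurableSet (bridgeSet N : Set (Fin N → ℝ)) :=
  measurableSet_eq_fun (measurable_partialSum N) measurable_const

theorem measurableSet_nonnegPathSet : MeasurableSet (nonnegPathSet N : Set (Fin N → ℝ)) := by
  simp only [nonnegPathSet, Set.ofPred_forall]
  exact .biInter (Set.to_countable _) fun j _ =>
    measurableSet_le measurable_const (measurable_partialSum j)

theorem measurableSet_minCountSet (hN : 0 < N) (i : ℕ) :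
    MeasurableSet (minCountSet hN i : Set (Fin N → ℝ)) := by
  have hset : minCountSet hN i =
      {x : Fin N → ℝ | #(minimizers fun a : Fin N => partialSum x (a + 1)) = i} := by
    ext x
    simp only [minCountSet, Set.mem_ofPred_eq, card_filter_eq_inf'_Icc hN]
  have hcard : Measurable fun x : Fin N → ℝ =>
      #(minimizers fun a : Fin N => partialSum x (a + 1)) := by
    simp only [minimizers, card_filter]
    refine Finset.measurable_sum _ fun a _ => Measurable.ite ?_ measurable_const measurable_const
    simp only [Set.ofPred_forall]
    exact .iInter fun b => measurableSet_le (measurable_partialSum _) (measurable_partialSum _)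
  exact hset ▸ hcard (measurableSet_singleton i)

end Measure

end RandomWalk

open MeasureTheory ProbabilityTheory RandomWalk
open scoped ENNReal

theorem cyclic_shift_bridge_bound_general
    {Ω : Type*} [MeasurableSpace Ω] (P : Measure Ω) [IsProbabilityMeasure P]
    (N : ℕ) (hN : 0 < N) (X : Fin N → Ω → ℝ)
    (hmeas : ∀ i, Measurable (X i))
    (hindep : iIndepFun X P)
    (hident : ∀ i, Measure.map (X i) P = Measure.map (X ⟨0, hN⟩) P)
    (S : ℕ → Ω → ℝ)
    (hS : ∀ j ω, S j ω = ∑ i ∈ Finset.univ.filter (fun i : Fin N => (i : ℕ) < j), X i ω)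
    (i : ℕ) :
    (ProbabilityTheory.cond P {ω | S N ω = 0}
        ({ω | ∀ j ∈ Finset.Icc 1 N, 0 ≤ S j ω}
          ∩ {ω | ((Finset.Icc 1 N).filter
              (fun j => S j ω = (Finset.Icc 1 N).inf' (Finset.nonempty_Icc.mpr hN) (fun k => S k ω))).card = i})).toReal
      ≤ (i : ℝ) / N := by
  have : NeZero N := ⟨hN.ne'⟩
  let Y : Ω → Fin N → ℝ := fun ω a => X a ω
  have hY : Measurable Y := measurable_pi_lambda _ hmeas
  have hlaw : P.map Y = Measure.pi fun _ => P.map (X ⟨0, hN⟩) := by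
    rw [hindep.map_fun_eq_pi_map fun a => (hmeas a).aemeasurable]
    simp_rw [hident]
  obtain rfl : S = fun j ω => partialSum (Y ω) j := funext₂ hS
  change (P[Y ⁻¹' (nonnegPathSet N ∩ minCountSet hN i) | Y ⁻¹' bridgeSet N]).toReal ≤ i / N
  have hE := measurableSet_nonnegPathSet.inter (measurableSet_minCountSet hN i)
  have hbound := cond_le_div_card (fun k => measurePreserving_cyclicShift (P.map (X ⟨0, hN⟩)) k)
    measurableSet_bridgeSet (fun k x => (cyclicShift_mem_bridgeSet_iff k).1) hE
    fun x hx => ncard_cyclicShift_mem_le hN hx i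
  rw [Fintype.card_fin] at hbound
  rw [cond_preimage_eq_cond_map hY measurableSet_bridgeSet hE, hlaw]
  calc _ ≤ ((i : ℝ≥0∞) / N).toReal := ENNReal.toReal_mono
        (ENNReal.div_ne_top (ENNReal.natCast_ne_top i) (by simpa using hN.ne')) hbound
    _ = i / N := by simp [ENNReal.toReal_div]

/-- **Cyclic shifting principle for bridges.** Let `S` be a random walk with i.i.d.
increments taking values in a finite symmetric set, conditioned on `S N = 0`, and let
`Z i` be the event that the minimum of `S 1, ..., S N` is attained exactly `i` times.
Then `P(S j ≥ 0 for all 1 ≤ j ≤ N, and Z i | S N = 0) ≤ i / N`. -/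
theorem cyclic_shift_bridge_bound
    {Ω : Type*} [MeasurableSpace Ω] (P : Measure Ω) [IsProbabilityMeasure P]
    (N : ℕ) (hN : 0 < N) (X : Fin N → Ω → ℝ)
    (hmeas : ∀ i, Measurable (X i))
    (hindep : iIndepFun X P)
    (hident : ∀ i, Measure.map (X i) P = Measure.map (X ⟨0, hN⟩) P)
    (F : Finset ℝ) (hFsymm : ∀ x ∈ F, -x ∈ F)
    (hvals : ∀ i, ∀ᵐ ω ∂P, X i ω ∈ F)
    (S : ℕ → Ω → ℝ)
    (hS : ∀ j ω, S j ω = ∑ i ∈ Finset.univ.filter (fun i : Fin N => (i : ℕ) < j), X i ω)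
    (hcond : P {ω | S N ω = 0} ≠ 0)
    (i : ℕ) (hi : 1 ≤ i) :
    (ProbabilityTheory.cond P {ω | S N ω = 0}
        ({ω | ∀ j ∈ Finset.Icc 1 N, 0 ≤ S j ω}
          ∩ {ω | ((Finset.Icc 1 N).filter
              (fun j => S j ω = (Finset.Icc 1 N).inf' (Finset.nonempty_Icc.mpr hN) (fun k => S k ω))).card = i})).toReal
      ≤ (i : ℝ) / N :=
  cyclic_shift_bridge_bound_general P N hN X hmeas hindep hident S hS i
end
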